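/- arXiv:1505.05654 — 2 statements merged into one kernel-verified Lean document; each statement's English description precedes it below -/
import Mathlib

section
/- Let (φ_k)_{k=1}^{D} be a strongly localized orthonormal basis of a D-dimensional linear subspace m of L₂(P^X), with parameters r_m, b, (Π_i)_{i=1}^{b}, (A_i)_{i=1}^{b}, A_c as in assumption (Aslb). Then for every β = (β_k)_{k=1}^{D} ∈ ℝ^D one has ‖∑_{k=1}^{D} β_k φ_k‖_∞ ≤ A_c·r_m·∑_{i=1}^{b} √(A_i)·max_{l∈Π_i}|β_l| ≤ A_c·r_m²·√D·max_{1≤k≤D}|β_k|. In particular, a strongly localized basis is a localized basis with constant r_φ = A_c·r_m². -/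
open MeasureTheory Function

/-- A strongly localized orthonormal basis `(φ_k)_{k=1}^D` of a linear model
`m ⊂ L₂(P^X)` (assumption (Aslb), with parameters `r`, `b`, blocks given by `part : Fin D → Fin b`,
constants `A i` and `Ac`) satisfies, for every `β ∈ ℝ^D` and every point `x`,
`|∑ k, β k * φ k x| ≤ Ac * r * ∑ i, √(A i) * max_{l ∈ Π i} |β l|
  ≤ Ac * r ^ 2 * √D * max_k |β k|`.
In particular a strongly localized basis is a localized basis with constant `Ac * r ^ 2`. -/
theorem strongly_localized_is_localized
    {𝒳 : Type*} [MeasurableSpace 𝒳] (PX : Measure 𝒳) [IsProbabilityMeasure PX]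
    (D b : ℕ) (hD : 0 < D) (φ : Fin D → 𝒳 → ℝ)
    -- `(φ_k)` is orthonormal in `L₂(P^X)`
    (horth : ∀ k l : Fin D, ∫ x, φ k x * φ l x ∂PX = if k = l then (1 : ℝ) else 0)
    (r Ac : ℝ) (hr : 0 < r) (hAc : 0 < Ac)
    -- the partition `(Π_i)_{i=1}^b` of `{1,…,D}`, with nonempty blocks
    (part : Fin D → Fin b)
    (hne : ∀ i : Fin b, (Finset.univ.filter fun k => part k = i).Nonempty)
    -- the constants `1 ≤ A_1 ≤ A_2 ≤ … ≤ A_b`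
    (A : Fin b → ℝ) (hA1 : ∀ i, (1 : ℝ) ≤ A i) (hAmono : Monotone A)
    -- (Aslb)(i): `∑_{i=1}^b √(A_i) ≤ r √D`
    (hsum : ∑ i : Fin b, Real.sqrt (A i) ≤ r * Real.sqrt D)
    -- (Aslb)(ii): `‖φ_k‖_∞ ≤ r √(A_i)` for `k ∈ Π_i`
    (hsup : ∀ k : Fin D, ∀ x, |φ k x| ≤ r * Real.sqrt (A (part k)))
    -- (Aslb)(iii): `card(Π_{j|k}) ≤ Ac · max(A_j / A_i, 1)` for `k ∈ Π_i`
    (hcard : ∀ (j : Fin b) (k : Fin D),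
      (({l : Fin D | part l = j ∧
          (support (φ k) ∩ support (φ l)).Nonempty}.ncard : ℝ))
        ≤ Ac * max (A j / A (part k)) 1) :
    ∀ β : Fin D → ℝ, ∀ x : 𝒳,
      |∑ k : Fin D, β k * φ k x|
          ≤ Ac * r * ∑ i : Fin b,
              Real.sqrt (A i) * (Finset.univ.filter fun k => part k = i).sup' (hne i)
                (fun l => |β l|)
        ∧ Ac * r * (∑ i : Fin b,
              Real.sqrt (A i) * (Finset.univ.filter fun k => part k = i).sup' (hne i)
                (fun l => |β l|))
          ≤ Ac * r ^ 2 * Real.sqrt D *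
              Finset.univ.sup' (Finset.univ_nonempty_iff.mpr ⟨⟨0, hD⟩⟩) (fun k => |β k|) := by
  classical
  intro β x
  have hA0 : ∀ i, (0:ℝ) < A i := fun i => lt_of_lt_of_le one_pos (hA1 i)
  set M : Fin b → ℝ := fun i =>
    (Finset.univ.filter fun k => part k = i).sup' (hne i) (fun l => |β l|) with hMdef
  have hM0 : ∀ i, 0 ≤ M i := by
    intro i
    obtain ⟨l, hl⟩ := hne i
    exact le_trans (abs_nonneg (β l)) (Finset.le_sup' (fun l => |β l|) hl)
  have hMle : ∀ l : Fin D, |β l| ≤ M (part l) := by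
    intro l
    have hmem : l ∈ Finset.univ.filter fun k => part k = part l := by simp
    exact Finset.le_sup' (fun l => |β l|) hmem
  have hsumM0 : 0 ≤ ∑ i : Fin b, Real.sqrt (A i) * M i := by
    refine Finset.sum_nonneg fun i _ => mul_nonneg (Real.sqrt_nonneg _) (hM0 i)
  constructor
  · -- first inequality
    by_cases hS : (Finset.univ.filter fun l : Fin D => φ l x ≠ 0).Nonempty
    · obtain ⟨k, hk, hkmax⟩ := Finset.exists_max_image _ part hS
      have hkx : φ k x ≠ 0 := (Finset.mem_filter.mp hk).2
      have hblock : ∀ i : Fin b,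
          ∑ l ∈ Finset.univ.filter (fun l => part l = i), |β l * φ l x|
            ≤ Ac * r * (Real.sqrt (A i) * M i) := by
        intro i
        have hrw : ∑ l ∈ (Finset.univ.filter (fun l : Fin D => part l = i)).filter
              (fun l => φ l x ≠ 0), |β l * φ l x|
            = ∑ l ∈ Finset.univ.filter (fun l : Fin D => part l = i), |β l * φ l x| := by
          refine Finset.sum_filter_of_ne ?_
          intro l _ h h0
          exact h (by simp [h0])
        rw [← hrw]
        set Q := (Finset.univ.filter (fun l : Fin D => part l = i)).filter
          (fun l => φ l x ≠ 0) with hQdef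
        rcases Q.eq_empty_or_nonempty with hQ | hQ
        · rw [hQ, Finset.sum_empty]
          have h1 : 0 ≤ Real.sqrt (A i) * M i :=
            mul_nonneg (Real.sqrt_nonneg _) (hM0 i)
          have h2 : (0:ℝ) ≤ Ac * r := mul_nonneg hAc.le hr.le
          exact mul_nonneg h2 h1
        · obtain ⟨l₀, hl₀⟩ := hQ
          have hl₀' := Finset.mem_filter.mp hl₀
          have hl₀part : part l₀ = i := (Finset.mem_filter.mp hl₀'.1).2
          have hl₀S : l₀ ∈ Finset.univ.filter fun l : Fin D => φ l x ≠ 0 :=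
            Finset.mem_filter.mpr ⟨Finset.mem_univ _, hl₀'.2⟩
          have hile : A i ≤ A (part k) := by
            rw [← hl₀part]; exact hAmono (hkmax l₀ hl₀S)
          have hcardQ : (Q.card : ℝ) ≤ Ac := by
            have hsubset : (Q : Set (Fin D)) ⊆
                {l : Fin D | part l = i ∧
                  (support (φ k) ∩ support (φ l)).Nonempty} := by
              intro l hl
              have hl' := Finset.mem_filter.mp hl
              exact ⟨(Finset.mem_filter.mp hl'.1).2, ⟨x, hkx, hl'.2⟩⟩
            have h1 : (Q.card : ℝ) ≤
                ({l : Fin D | part l = i ∧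
                  (support (φ k) ∩ support (φ l)).Nonempty}.ncard : ℝ) := by
              rw [← Set.ncard_coe_finset Q]
              exact_mod_cast Set.ncard_le_ncard hsubset (Set.toFinite _)
            have h2 := hcard i k
            have hmax : max (A i / A (part k)) 1 = 1 :=
              max_eq_right ((div_le_one (hA0 _)).mpr hile)
            rw [hmax, mul_one] at h2
            linarith
          have hterm : ∀ l ∈ Q, |β l * φ l x| ≤ M i * (r * Real.sqrt (A i)) := by
            intro l hl
            have hl' := Finset.mem_filter.mp hl
            have hlpart : part l = i := (Finset.mem_filter.mp hl'.1).2
            rw [abs_mul]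
            have h1 : |β l| ≤ M i := hlpart ▸ hMle l
            have h2 : |φ l x| ≤ r * Real.sqrt (A i) := hlpart ▸ hsup l x
            exact mul_le_mul h1 h2 (abs_nonneg _) (hM0 i)
          calc ∑ l ∈ Q, |β l * φ l x|
              ≤ Q.card • (M i * (r * Real.sqrt (A i))) :=
                Finset.sum_le_card_nsmul _ _ _ hterm
            _ = (Q.card : ℝ) * (M i * (r * Real.sqrt (A i))) := by
                rw [nsmul_eq_mul]
            _ ≤ Ac * (M i * (r * Real.sqrt (A i))) := by
                refine mul_le_mul_of_nonneg_right hcardQ ?_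
                exact mul_nonneg (hM0 i) (mul_nonneg hr.le (Real.sqrt_nonneg _))
            _ = Ac * r * (Real.sqrt (A i) * M i) := by ring
      calc |∑ k : Fin D, β k * φ k x|
          ≤ ∑ k : Fin D, |β k * φ k x| := Finset.abs_sum_le_sum_abs _ _
        _ = ∑ i : Fin b, ∑ l ∈ Finset.univ.filter (fun l : Fin D => part l = i),
              |β l * φ l x| := (Finset.sum_fiberwise _ _ _).symm
        _ ≤ ∑ i : Fin b, Ac * r * (Real.sqrt (A i) * M i) :=
            Finset.sum_le_sum fun i _ => hblock i
        _ = Ac * r * ∑ i : Fin b, Real.sqrt (A i) * M i := by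
            rw [Finset.mul_sum]
    · have hz : ∀ k : Fin D, β k * φ k x = 0 := by
        intro k
        have : φ k x = 0 := by
          by_contra h
          exact hS ⟨k, Finset.mem_filter.mpr ⟨Finset.mem_univ _, h⟩⟩
        simp [this]
      rw [Finset.sum_eq_zero fun k _ => hz k, abs_zero]
      exact mul_nonneg (mul_nonneg hAc.le hr.le) hsumM0
  · -- second inequality
    set K := Finset.univ.sup' (Finset.univ_nonempty_iff.mpr ⟨⟨0, hD⟩⟩)
      (fun k : Fin D => |β k|) with hKdef
    have hK : ∀ k : Fin D, |β k| ≤ K := fun k => Finset.le_sup' (fun k => |β k|) (Finset.mem_univ k)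
    have hK0 : 0 ≤ K := le_trans (abs_nonneg _) (hK ⟨0, hD⟩)
    have hMK : ∀ i, M i ≤ K := by
      intro i
      exact Finset.sup'_le _ _ fun l _ => hK l
    have h1 : ∑ i : Fin b, Real.sqrt (A i) * M i ≤ (∑ i : Fin b, Real.sqrt (A i)) * K := by
      rw [Finset.sum_mul]
      exact Finset.sum_le_sum fun i _ =>
        mul_le_mul_of_nonneg_left (hMK i) (Real.sqrt_nonneg _)
    have h2 : (∑ i : Fin b, Real.sqrt (A i)) * K ≤ r * Real.sqrt D * K :=
      mul_le_mul_of_nonneg_right hsum hK0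
    calc Ac * r * (∑ i : Fin b, Real.sqrt (A i) * M i)
        ≤ Ac * r * (r * Real.sqrt D * K) := by
          refine mul_le_mul_of_nonneg_left (le_trans h1 h2) ?_
          exact mul_nonneg hAc.le hr.le
      _ = Ac * r ^ 2 * Real.sqrt D * K := by ring
end

section
/- (Representation of the empirical excess risk.) In the M-estimation framework, assume also that s ↦ P(γ(s)) is a real-valued function on m minimized at s_m ∈ m, and set ℓ(s_m, s) = P(γ(s) − γ(s_m)) and ℓ_emp(s_m, ŝ_m) = P_n(γ(s_m) − γ(ŝ_m)). Let 𝓖 be a nonnegative functional on m and R₀ ∈ ℝ₊ ∪ {+∞}, and suppose 𝓖(ŝ_m) ≤ R₀. Define, for C ≥ 0, d̃_C = {s ∈ m : ℓ(s_m,s) = C and 𝓖(s) ≤ R₀} and m̃_C = {s ∈ m : ℓ(s_m,s) ≤ C and 𝓖(s) ≤ R₀}. Then ℓ_emp(s_m, ŝ_m) = max_{C≥0} { sup_{s∈d̃_C} (P_n − P)(γ(s_m) − γ(s)) − C } = max_{C≥0} { sup_{s∈m̃_C} (P_n − P)(γ(s_m) − γ(s)) − C }. -/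
open MeasureTheory
open scoped ENNReal

/-- The value of the empirical measure `P_n = n⁻¹ ∑ δ_{Z_i}` on `f`. -/
noncomputable def empInt {𝒵 : Type*} (n : ℕ) (Z : Fin n → 𝒵) (f : 𝒵 → ℝ) : ℝ :=
  (n : ℝ)⁻¹ * ∑ i : Fin n, f (Z i)

/-- `(P_n − P)(f)`. -/
noncomputable def empMinusTrue {𝒵 : Type*} [MeasurableSpace 𝒵] (P : Measure 𝒵) (n : ℕ)
    (Z : Fin n → 𝒵) (f : 𝒵 → ℝ) : ℝ :=
  empInt n Z f - ∫ z, f z ∂P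


private lemma key_le (T C : ℝ) {ι : Sort*} (f : ι → ℝ) (hub : ∀ i, f i ≤ T + C) :
    (⨆ i, ((f i : ℝ) : EReal)) - (C : EReal) ≤ (T : EReal) := by
  have h1 : (⨆ i, ((f i : ℝ) : EReal)) ≤ ((T + C : ℝ) : EReal) :=
    iSup_le fun i => EReal.coe_le_coe_iff.2 (hub i)
  have h2 : ((T + C : ℝ) : EReal) - (C : EReal) = (T : EReal) := by
    rw [← EReal.coe_sub]; norm_num
  calc (⨆ i, ((f i : ℝ) : EReal)) - (C : EReal)
      ≤ ((T + C : ℝ) : EReal) - (C : EReal) := EReal.sub_le_sub h1 (le_refl _)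
    _ = (T : EReal) := h2

private lemma key_eq (T C : ℝ) {ι : Sort*} (f : ι → ℝ) (hub : ∀ i, f i ≤ T + C)
    (i₀ : ι) (hi₀ : f i₀ = T + C) :
    (⨆ i, ((f i : ℝ) : EReal)) - (C : EReal) = (T : EReal) := by
  have h1 : (⨆ i, ((f i : ℝ) : EReal)) = ((T + C : ℝ) : EReal) :=
    le_antisymm (iSup_le fun i => EReal.coe_le_coe_iff.2 (hub i))
      (le_iSup_of_le i₀ (by rw [hi₀]))
  rw [h1, ← EReal.coe_sub]; norm_num

/-- representation of the empirical excess risk. In the M-estimation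
framework, with `ℓ(s_m, s) = P(γ(s) − γ(s_m))`, `ℓ_emp(s_m, ŝ_m) = P_n(γ(s_m) − γ(ŝ_m))`,
`𝓖` a nonnegative functional, `R₀ ∈ ℝ₊ ∪ {+∞}` and `𝓖(ŝ_m) ≤ R₀`:
`ℓ_emp(s_m, ŝ_m) = max_{C ≥ 0} { sup_{s ∈ d̃_C} (P_n − P)(γ(s_m) − γ(s)) − C }
                 = max_{C ≥ 0} { sup_{s ∈ m̃_C} (P_n − P)(γ(s_m) − γ(s)) − C }`
(sup over the empty set being `−∞`, computed in `EReal`; the maxima are attained). -/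
theorem empirical_excess_risk_representation
    {m : Type*} {𝒵 : Type*} [MeasurableSpace 𝒵] (P : Measure 𝒵) [IsProbabilityMeasure P]
    (n : ℕ) (Z : Fin n → 𝒵) (γ : m → 𝒵 → ℝ)
    (hInt : ∀ s : m, Integrable (γ s) P)
    (sm : m) (hsm : ∀ s : m, ∫ z, γ sm z ∂P ≤ ∫ z, γ s z ∂P)
    (shat : m) (hshat : ∀ s : m, empInt n Z (γ shat) ≤ empInt n Z (γ s))
    (𝓖 : m → ℝ) (h𝓖 : ∀ s, 0 ≤ 𝓖 s) (R₀ : ℝ≥0∞)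
    (hGshat : ENNReal.ofReal (𝓖 shat) ≤ R₀) :
    -- sphere version
    (((empInt n Z (γ sm) - empInt n Z (γ shat) : ℝ) : EReal)
        = ⨆ C : {C : ℝ // 0 ≤ C},
            (⨆ s : {s : m //
                (∫ z, γ s z ∂P - ∫ z, γ sm z ∂P) = C.1 ∧ ENNReal.ofReal (𝓖 s) ≤ R₀},
              ((empMinusTrue P n Z (fun z => γ sm z - γ s.1 z) : ℝ) : EReal)) - (C.1 : EReal))
      ∧ (∃ C : ℝ, 0 ≤ C ∧
          ((empInt n Z (γ sm) - empInt n Z (γ shat) : ℝ) : EReal)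
            = (⨆ s : {s : m //
                  (∫ z, γ s z ∂P - ∫ z, γ sm z ∂P) = C ∧ ENNReal.ofReal (𝓖 s) ≤ R₀},
                ((empMinusTrue P n Z (fun z => γ sm z - γ s.1 z) : ℝ) : EReal)) - (C : EReal))
      -- ball version
      ∧ (((empInt n Z (γ sm) - empInt n Z (γ shat) : ℝ) : EReal)
          = ⨆ C : {C : ℝ // 0 ≤ C},
              (⨆ s : {s : m //
                  (∫ z, γ s z ∂P - ∫ z, γ sm z ∂P) ≤ C.1 ∧ ENNReal.ofReal (𝓖 s) ≤ R₀},
                ((empMinusTrue P n Z (fun z => γ sm z - γ s.1 z) : ℝ) : EReal)) - (C.1 : EReal))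
      ∧ (∃ C : ℝ, 0 ≤ C ∧
          ((empInt n Z (γ sm) - empInt n Z (γ shat) : ℝ) : EReal)
            = (⨆ s : {s : m //
                  (∫ z, γ s z ∂P - ∫ z, γ sm z ∂P) ≤ C ∧ ENNReal.ofReal (𝓖 s) ≤ R₀},
                ((empMinusTrue P n Z (fun z => γ sm z - γ s.1 z) : ℝ) : EReal)) - (C : EReal)) := by

  set T : ℝ := empInt n Z (γ sm) - empInt n Z (γ shat) with hTdef
  have hF : ∀ s : m, empMinusTrue P n Z (fun z => γ sm z - γ s z)
      = (empInt n Z (γ sm) - empInt n Z (γ s)) + (∫ z, γ s z ∂P - ∫ z, γ sm z ∂P) := by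
    intro s
    unfold empMinusTrue empInt
    rw [integral_sub (hInt sm) (hInt s), Finset.sum_sub_distrib]
    ring
  have hTs : ∀ s : m, empInt n Z (γ sm) - empInt n Z (γ s) ≤ T := by
    intro s
    have := hshat s
    simp only [hTdef]
    linarith
  set C₀ : ℝ := ∫ z, γ shat z ∂P - ∫ z, γ sm z ∂P with hC₀def
  have hC₀ : 0 ≤ C₀ := by have := hsm shat; simp only [hC₀def]; linarith
  have hFhat : empMinusTrue P n Z (fun z => γ sm z - γ shat z) = T + C₀ := by
    rw [hF shat]
  -- sphere bounds
  have sph_ub : ∀ (C : ℝ),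
      ∀ s : {s : m // (∫ z, γ s z ∂P - ∫ z, γ sm z ∂P) = C ∧ ENNReal.ofReal (𝓖 s) ≤ R₀},
      empMinusTrue P n Z (fun z => γ sm z - γ s.1 z) ≤ T + C := by
    intro C s
    rw [hF s.1, s.2.1]
    have := hTs s.1
    linarith
  have ball_ub : ∀ (C : ℝ),
      ∀ s : {s : m // (∫ z, γ s z ∂P - ∫ z, γ sm z ∂P) ≤ C ∧ ENNReal.ofReal (𝓖 s) ≤ R₀},
      empMinusTrue P n Z (fun z => γ sm z - γ s.1 z) ≤ T + C := by
    intro C s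
    rw [hF s.1]
    have h1 := hTs s.1
    have h2 := s.2.1
    linarith
  have sph_eq : ((T : ℝ) : EReal)
      = (⨆ s : {s : m //
            (∫ z, γ s z ∂P - ∫ z, γ sm z ∂P) = C₀ ∧ ENNReal.ofReal (𝓖 s) ≤ R₀},
          ((empMinusTrue P n Z (fun z => γ sm z - γ s.1 z) : ℝ) : EReal)) - (C₀ : EReal) :=
    (key_eq T C₀ _ (sph_ub C₀) ⟨shat, rfl, hGshat⟩ hFhat).symm
  have ball_eq : ((T : ℝ) : EReal)
      = (⨆ s : {s : m //
            (∫ z, γ s z ∂P - ∫ z, γ sm z ∂P) ≤ C₀ ∧ ENNReal.ofReal (𝓖 s) ≤ R₀},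
          ((empMinusTrue P n Z (fun z => γ sm z - γ s.1 z) : ℝ) : EReal)) - (C₀ : EReal) :=
    (key_eq T C₀ _ (ball_ub C₀) ⟨shat, le_refl _, hGshat⟩ hFhat).symm
  refine ⟨?_, ⟨C₀, hC₀, sph_eq⟩, ?_, ⟨C₀, hC₀, ball_eq⟩⟩
  · exact le_antisymm (le_iSup_of_le ⟨C₀, hC₀⟩ sph_eq.le)
      (iSup_le fun C => key_le T C.1 _ (sph_ub C.1))
  · exact le_antisymm (le_iSup_of_le ⟨C₀, hC₀⟩ ball_eq.le)
      (iSup_le fun C => key_le T C.1 _ (ball_ub C.1))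
end
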